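/- Let u and v be nonzero Laurent polynomials over ℂ having symmetry with types ε_u z^{c_u} and ε_v z^{c_v}, and suppose v(z)v⋆(z) divides u(z)u⋆(z) in ℂ[z,z^{−1}]. Then there exists a Laurent polynomial d having symmetry such that d(z)d⋆(z) = u(z)u⋆(z)/(v(z)v⋆(z)). Moreover, every Laurent polynomial d having symmetry that satisfies d(z)d⋆(z) = u(z)u⋆(z)/(v(z)v⋆(z)) has symmetry type ε_uε_v z^{2k + c_u − c_v} for some k ∈ ℤ. -/

import Mathlib

open LaurentPolynomial Matrix
open scoped Classical

noncomputable section

abbrev LP := LaurentPolynomial ℂ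

namespace QT

/-- The coefficient of `z^k` in a Laurent polynomial. -/
def coeff (u : LP) (k : ℤ) : ℂ := (show ℤ →₀ ℂ from AddMonoidAlgebra.coeff u) k

/-- The Hermitian conjugate `u⋆(z) = Σ conj(u(k)) z^{-k}`. -/
def hstar (u : LP) : LP :=
  AddMonoidAlgebra.ofCoeff <| show ℤ →₀ ℂ from
    Finsupp.mapDomain (fun k => -k)
      (Finsupp.mapRange (starRingEnd ℂ) (map_zero _) (show ℤ →₀ ℂ from AddMonoidAlgebra.coeff u))

/-- `u` has symmetry with type `ε z^c`, i.e. `u(k) = ε u(c-k)` for all `k`. -/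
def SymT (u : LP) (ε : ℂ) (c : ℤ) : Prop := ∀ k : ℤ, coeff u k = ε * coeff u (c - k)

def Sgn (ε : ℂ) : Prop := ε = 1 ∨ ε = -1

/-- `u` has symmetry (with some type). -/
def HasSym (u : LP) : Prop := ∃ ε c, Sgn ε ∧ SymT u ε c

/-- The Laurent polynomial `z - a`. -/
def zsub (a : ℂ) : LP := T 1 - LaurentPolynomial.C a

/-- `m` is the multiplicity of `z₀` as a zero of `u`. -/
def mzIs (u : LP) (z₀ : ℂ) (m : ℕ) : Prop := zsub z₀ ^ m ∣ u ∧ ¬ zsub z₀ ^ (m + 1) ∣ u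

/-- The multiplicity of `z₀` as a zero of `u`, as a function. -/
def mzF (u : LP) (z₀ : ℂ) : ℕ := sSup {m : ℕ | zsub z₀ ^ m ∣ u}

/-- The difference-of-(Hermitian)-squares property with respect to symmetry type `ε z^c`. -/
def DOS (u : LP) (ε : ℂ) (c : ℤ) : Prop :=
  ∃ (u₁ u₂ : LP) (ε₁ ε₂ : ℂ) (c₁ c₂ : ℤ),
    Sgn ε₁ ∧ Sgn ε₂ ∧ SymT u₁ ε₁ c₁ ∧ SymT u₂ ε₂ c₂ ∧
    u₁ * hstar u₁ - u₂ * hstar u₂ = u ∧ ε₁ * ε₂ = ε ∧ c₁ - c₂ = c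

/-- Degree: the largest exponent with nonzero coefficient (0 for the zero polynomial). -/
def degL (u : LP) : ℤ :=
  if h : u = 0 then 0
  else (show ℤ →₀ ℂ from AddMonoidAlgebra.coeff u).support.max' (Finsupp.support_nonempty_iff.mpr (mt AddMonoidAlgebra.coeff_eq_zero.mp h))

/-- Lower degree: the smallest exponent with nonzero coefficient (0 for zero). -/
def ldegL (u : LP) : ℤ :=
  if h : u = 0 then 0
  else (show ℤ →₀ ℂ from AddMonoidAlgebra.coeff u).support.min' (Finsupp.support_nonempty_iff.mpr (mt AddMonoidAlgebra.coeff_eq_zero.mp h))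

/-- Length `deg - ldeg`, with `len 0 = ⊥`. -/
def lenL (u : LP) : WithBot ℤ := if u = 0 then ⊥ else ((degL u - ldegL u : ℤ) : WithBot ℤ)

/-- `g` is a greatest common divisor of `a` and `b`. -/
def IsGCD2 (g a b : LP) : Prop := g ∣ a ∧ g ∣ b ∧ ∀ e : LP, e ∣ a → e ∣ b → e ∣ g

/-- `g` is a greatest common divisor of `a`, `b`, `c`, `d`. -/
def IsGCD4 (g a b c d : LP) : Prop :=
  g ∣ a ∧ g ∣ b ∧ g ∣ c ∧ g ∣ d ∧ ∀ e : LP, e ∣ a → e ∣ b → e ∣ c → e ∣ d → e ∣ g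

/-- The Hermitian conjugate transpose of a matrix of Laurent polynomials. -/
def hstarM (A : Matrix (Fin 2) (Fin 2) LP) : Matrix (Fin 2) (Fin 2) LP :=
  fun i j => hstar (A j i)

def IsHerm (A : Matrix (Fin 2) (Fin 2) LP) : Prop := hstarM A = A

/-- `diag(1, -1)`. -/
def Jmat : Matrix (Fin 2) (Fin 2) LP := Matrix.diagonal ![1, -1]

/-- A square matrix of Laurent polynomials is strongly invertible if its determinant is a
nonzero monomial. -/
def StrongInv (A : Matrix (Fin 2) (Fin 2) LP) : Prop :=
  ∃ (lam : ℂ) (k : ℤ), lam ≠ 0 ∧ A.det = LaurentPolynomial.C lam * T k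

/-- Compatible symmetry for a `2×2` matrix of Laurent polynomials. -/
def CompatSym (A : Matrix (Fin 2) (Fin 2) LP) : Prop :=
  ∃ (ε ε' : Fin 2 → ℂ) (c c' : Fin 2 → ℤ),
    (∀ j, Sgn (ε j)) ∧ (∀ k, Sgn (ε' k)) ∧
    ∀ j k, SymT (A j k) (ε j * ε' k) (c' k - c j)

/-- Substitution `z ↦ z²`. -/
def sqDom (u : LP) : LP :=
  AddMonoidAlgebra.ofCoeff <| show ℤ →₀ ℂ from Finsupp.mapDomain (fun k => 2 * k) (show ℤ →₀ ℂ from AddMonoidAlgebra.coeff u)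

/-- Substitution `z ↦ -z`. -/
def negSub (u : LP) : LP :=
  (show ℤ →₀ ℂ from AddMonoidAlgebra.coeff u).sum fun k c => show LP from AddMonoidAlgebra.ofCoeff (Finsupp.single k ((-1 : ℂ) ^ k * c))

/-- The `γ`-coset `u^{[γ]}(z) = Σ_k u(γ + 2k) z^k`. -/
def cosetL (u : LP) (γ : ℤ) : LP :=
  AddMonoidAlgebra.ofCoeff <| show ℤ →₀ ℂ from
    Finsupp.comapDomain (fun k : ℤ => γ + 2 * k) (show ℤ →₀ ℂ from AddMonoidAlgebra.coeff u)
      (by intro a _ b _ h; simp only at h; omega)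

/-- Evaluation of a Laurent polynomial at a point. -/
def evalL (u : LP) (z : ℂ) : ℂ := (show ℤ →₀ ℂ from AddMonoidAlgebra.coeff u).sum fun k c => c * z ^ k

/-- `{a; b₁, b₂}_{Θ,(1,-1)}` is a quasi-tight framelet filter bank. -/
def QTFB (a Θ b₁ b₂ : LP) : Prop :=
  sqDom Θ * hstar a * a + hstar b₁ * b₁ - hstar b₂ * b₂ = Θ ∧
  sqDom Θ * hstar a * negSub a + hstar b₁ * negSub b₁ - hstar b₂ * negSub b₂ = 0

/-- The matrix `N_{a,Θ|n_b}` built from the quotients `A`, `B`. -/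
def Nmat (A B : LP) : Matrix (Fin 2) (Fin 2) LP :=
  LaurentPolynomial.C (2 : ℂ)⁻¹ •
    !![cosetL A 0 + cosetL B 0, cosetL A 1 - cosetL B 1;
       T 1 * (cosetL A 1 + cosetL B 1), cosetL A 0 - cosetL B 0]

/-!
A nonzero Laurent polynomial has symmetry exactly when it is associated to its reciprocal
`invert u = u(z⁻¹)`: a unit of `ℂ[z, z⁻¹]` is a monomial `λ zⁿ`, and applying the involution
twice forces `λ² = 1`. Being associated to one's reciprocal passes to gcds and to cofactors.
So write `u = g u₁`, `v = g v₁` with `g = gcd(u, v)` and `u₁`, `v₁` coprime; cancelling `g g⋆`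
gives `v₁⋆ ∣ u₁ u₁⋆`, hence `v₁⋆ ∣ u₁`, and `d = u₁ / v₁⋆` works.

For the type: if `d` has type `ε zᶜ` then `c = ldeg d + deg d`, while `d d⋆` has degree
`deg d - ldeg d ≡ c (mod 2)` and leading coefficient `ε |trail d|²`. Comparing degrees and
leading coefficients in `d d⋆ · v v⋆ = u u⋆` yields the parity of `c` and the sign `ε`.
-/

-- `LP` is the localization of `ℂ[X]` at `X`, so every ideal is extended from a principal one.
instance : IsPrincipalIdealRing LP where
  principal J := by
    rw [← IsLocalization.map_under (Submonoid.powers (Polynomial.X : Polynomial ℂ)) LP J]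
    obtain ⟨p, hp⟩ := (IsPrincipalIdealRing.principal (J.under (Polynomial ℂ))).principal
    exact ⟨algebraMap _ _ p, by
      rw [hp, Ideal.submodule_span_eq, Ideal.map_span, Set.image_singleton]⟩

section Involution

variable {α F : Type*} [CommMonoidWithZero α] [FunLike F α α] [MonoidWithZeroHomClass F α α]
  {σ : F}

lemma associated_map_gcd [GCDMonoid α] (hσ : Function.Involutive σ) {a b : α}
    (ha : Associated (σ a) a) (hb : Associated (σ b) b) :
    Associated (σ (gcd a b)) (gcd a b) := by
  have hdvd : σ (gcd a b) ∣ gcd a b :=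
    dvd_gcd ((map_dvd σ (gcd_dvd_left a b)).trans ha.dvd)
      ((map_dvd σ (gcd_dvd_right a b)).trans hb.dvd)
  exact associated_of_dvd_dvd hdvd (by simpa only [hσ (gcd a b)] using map_dvd σ hdvd)

lemma associated_map_of_mul [IsCancelMulZero α] (hσ : Function.Involutive σ) {a b : α}
    (ha0 : a ≠ 0) (hab : Associated (σ (a * b)) (a * b)) (ha : Associated (σ a) a) :
    Associated (σ b) b := by
  have hσa : σ a ≠ 0 := fun h => ha0 (by rw [← hσ a, h, map_zero])
  exact Associated.of_mul_left (by rwa [← map_mul]) ha hσa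

end Involution

lemma coeff_invert (a : LP) (k : ℤ) : coeff (invert a) k = coeff a (-k) := invert_apply a k

lemma coeff_hstar (a : LP) (k : ℤ) : coeff (hstar a) k = starRingEnd ℂ (coeff a (-k)) := by
  show Finsupp.mapDomain _ _ k = _
  conv_lhs => rw [← neg_neg k]
  rw [Finsupp.mapDomain_apply neg_injective, Finsupp.mapRange_apply]; rfl

lemma coeff_C_mul_T (lam : ℂ) (n k : ℤ) : coeff (C lam * T n) k = if n = k then lam else 0 := by
  rw [← single_eq_C_mul_T]; exact Finsupp.single_apply

lemma coeff_C_mul_T_mul (lam : ℂ) (n : ℤ) (a : LP) (k : ℤ) :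
    coeff (C lam * T n * a) k = lam * coeff a (k - n) := by
  rw [← single_eq_C_mul_T, coeff, AddMonoidAlgebra.coeff_single_mul_apply, neg_add_eq_sub]; rfl

lemma invert_ne_zero {a : LP} (ha : a ≠ 0) : invert a ≠ 0 :=
  (map_ne_zero_iff _ invert.injective).mpr ha

def hstarRingHom : LP →+* LP :=
  (AddMonoidAlgebra.mapRingHom ℤ (starRingEnd ℂ)).comp (invert : LP ≃ₐ[ℂ] LP).toRingHom

lemma hstarRingHom_apply (a : LP) : hstarRingHom a = hstar a := by
  ext k; change coeff _ k = coeff _ k; rw [coeff_hstar]; simp [hstarRingHom, coeff]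

lemma hstar_mul (a b : LP) : hstar (a * b) = hstar a * hstar b := by
  simp only [← hstarRingHom_apply, map_mul]

lemma hstar_hstar (a : LP) : hstar (hstar a) = a := by
  ext k; change coeff _ k = coeff _ k; rw [coeff_hstar, coeff_hstar, neg_neg, Complex.conj_conj]

lemma hstar_invert (a : LP) : hstar (invert a) = invert (hstar a) := by
  ext k; change coeff _ k = coeff _ k; rw [coeff_hstar, coeff_invert, coeff_invert, coeff_hstar]

lemma hstar_ne_zero {a : LP} (ha : a ≠ 0) : hstar a ≠ 0 := fun h =>
  ha (by rw [← hstar_hstar a, h, ← hstarRingHom_apply, map_zero])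

lemma associated_invert_hstar {a : LP} (h : Associated (invert a) a) :
    Associated (invert (hstar a)) (hstar a) := by
  simpa only [← hstar_invert, hstarRingHom_apply] using h.map hstarRingHom

lemma Sgn.ne_zero {ε : ℂ} (h : Sgn ε) : ε ≠ 0 := by
  rcases h with rfl | rfl <;> norm_num

lemma Sgn.mul_self {ε : ℂ} (h : Sgn ε) : ε * ε = 1 := by
  rcases h with rfl | rfl <;> norm_num

lemma Sgn.mul {ε δ : ℂ} (hε : Sgn ε) (hδ : Sgn δ) : Sgn (ε * δ) := by
  rcases hε with rfl | rfl <;> rcases hδ with rfl | rfl <;> simp [Sgn]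

lemma Sgn.eq_of_mul_ofReal_eq {s t : ℂ} {x y : ℝ} (hs : Sgn s) (ht : Sgn t) (hx : 0 < x)
    (hy : 0 < y) (h : s * x = t * y) : s = t := by
  have hre := congrArg Complex.re h
  rcases hs with rfl | rfl <;> rcases ht with rfl | rfl <;> simp at hre ⊢ <;> linarith

lemma symT_iff {a : LP} {ε : ℂ} {c : ℤ} : SymT a ε c ↔ a = C ε * T c * invert a := by
  rw [LaurentPolynomial.ext_iff]
  refine forall_congr' fun k => ?_
  change _ ↔ coeff a k = coeff _ k
  rw [coeff_C_mul_T_mul, coeff_invert, neg_sub]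

lemma SymT.associated_invert {a : LP} {ε : ℂ} {c : ℤ} (hε : ε ≠ 0) (h : SymT a ε c) :
    Associated (invert a) a := by
  have hunit : IsUnit (C ε * T c) := ((isUnit_iff_ne_zero.mpr hε).map C).mul (isUnit_T c)
  conv_rhs => rw [symT_iff.mp h]
  exact (associated_unit_mul_left _ _ hunit).symm

def leadCoeff (a : LP) : ℂ := coeff a (degL a)

def trailCoeff (a : LP) : ℂ := coeff a (ldegL a)

lemma leadCoeff_ne_zero {a : LP} (ha : a ≠ 0) : leadCoeff a ≠ 0 := by
  rw [leadCoeff, degL, dif_neg ha]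
  exact Finsupp.mem_support_iff.mp (Finset.max'_mem _ _)

lemma trailCoeff_ne_zero {a : LP} (ha : a ≠ 0) : trailCoeff a ≠ 0 := by
  rw [trailCoeff, ldegL, dif_neg ha]
  exact Finsupp.mem_support_iff.mp (Finset.min'_mem _ _)

lemma le_degL {a : LP} {k : ℤ} (hk : coeff a k ≠ 0) : k ≤ degL a := by
  have ha : a ≠ 0 := by rintro rfl; exact hk rfl
  rw [degL, dif_neg ha]
  exact Finset.le_max' _ _ (Finsupp.mem_support_iff.mpr hk)

lemma ldegL_le {a : LP} {k : ℤ} (hk : coeff a k ≠ 0) : ldegL a ≤ k := by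
  have ha : a ≠ 0 := by rintro rfl; exact hk rfl
  rw [ldegL, dif_neg ha]
  exact Finset.min'_le _ _ (Finsupp.mem_support_iff.mpr hk)

lemma ldegL_le_degL {a : LP} (ha : a ≠ 0) : ldegL a ≤ degL a := ldegL_le (leadCoeff_ne_zero ha)

lemma degL_eq_of {a : LP} {n : ℤ} (hn : coeff a n ≠ 0) (h : ∀ k, coeff a k ≠ 0 → k ≤ n) :
    degL a = n :=
  le_antisymm (h _ (leadCoeff_ne_zero fun ha => hn (by rw [ha]; rfl))) (le_degL hn)

lemma degL_congr {a b : LP} (h : ∀ k, coeff a k = 0 ↔ coeff b k = 0) : degL a = degL b := by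
  by_cases hb : b = 0
  · have ha : a = 0 := by ext k; exact (h k).mpr (by rw [hb]; rfl)
    rw [ha, hb]
  exact degL_eq_of ((h _).not.mpr (leadCoeff_ne_zero hb)) fun k hk => le_degL ((h k).not.mp hk)

lemma degL_invert (a : LP) : degL (invert a) = -ldegL a := by
  by_cases ha : a = 0
  · simp [ha, degL, ldegL]
  refine degL_eq_of (by rw [coeff_invert, neg_neg]; exact trailCoeff_ne_zero ha) fun k hk => ?_
  rw [coeff_invert] at hk
  linarith [ldegL_le hk]

lemma degL_hstar (a : LP) : degL (hstar a) = -ldegL a := by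
  rw [← degL_invert]
  exact degL_congr fun k => by rw [coeff_hstar, coeff_invert, map_eq_zero]

lemma degL_C_mul_T {lam : ℂ} (hlam : lam ≠ 0) (n : ℤ) : degL (C lam * T n) = n :=
  degL_eq_of (by rwa [coeff_C_mul_T, if_pos rfl]) fun k hk => by
    rw [coeff_C_mul_T] at hk
    split_ifs at hk with hnk
    exacts [hnk.ge, absurd rfl hk]

lemma degL_one : degL 1 = 0 := by
  simpa using degL_C_mul_T one_ne_zero 0

lemma ldegL_one : ldegL 1 = 0 := by
  rw [← neg_neg (ldegL 1), ← degL_invert, map_one, degL_one, neg_zero]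

lemma coeff_mul_degL_add (a b : LP) :
    coeff (a * b) (degL a + degL b) = leadCoeff a * leadCoeff b := by
  apply AddMonoidAlgebra.coeff_mul_add_of_uniqueAdd
  intro x y hx hy hxy
  have := le_degL (Finsupp.mem_support_iff.mp hx)
  have := le_degL (Finsupp.mem_support_iff.mp hy)
  constructor <;> omega

lemma degL_mul {a b : LP} (ha : a ≠ 0) (hb : b ≠ 0) : degL (a * b) = degL a + degL b := by
  have hlead : coeff (a * b) (degL a + degL b) ≠ 0 := by
    rw [coeff_mul_degL_add]
    exact mul_ne_zero (leadCoeff_ne_zero ha) (leadCoeff_ne_zero hb)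
  refine degL_eq_of hlead fun k hk => ?_
  obtain ⟨x, hx, y, hy, rfl⟩ := Finset.mem_add.mp
    (AddMonoidAlgebra.support_coeff_mul_subset a b (Finsupp.mem_support_iff.mpr hk))
  exact add_le_add (le_degL (Finsupp.mem_support_iff.mp hx))
    (le_degL (Finsupp.mem_support_iff.mp hy))

lemma ldegL_mul {a b : LP} (ha : a ≠ 0) (hb : b ≠ 0) : ldegL (a * b) = ldegL a + ldegL b := by
  have h := degL_mul (invert_ne_zero ha) (invert_ne_zero hb)
  rw [← map_mul, degL_invert, degL_invert, degL_invert] at h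
  linarith

lemma leadCoeff_mul {a b : LP} (ha : a ≠ 0) (hb : b ≠ 0) :
    leadCoeff (a * b) = leadCoeff a * leadCoeff b := by
  rw [leadCoeff, degL_mul ha hb, coeff_mul_degL_add]

lemma leadCoeff_hstar (a : LP) : leadCoeff (hstar a) = starRingEnd ℂ (trailCoeff a) := by
  rw [leadCoeff, degL_hstar, coeff_hstar, neg_neg, trailCoeff]

lemma exists_eq_C_mul_T_of_isUnit {w : LP} (h : IsUnit w) : ∃ lam ≠ 0, ∃ n, w = C lam * T n := by
  obtain ⟨w', hw'⟩ := h.exists_right_inv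
  have hw0 : w ≠ 0 := left_ne_zero_of_mul_eq_one hw'
  have hw'0 : w' ≠ 0 := right_ne_zero_of_mul_eq_one hw'
  have hdeg := degL_mul hw0 hw'0
  have hldeg := ldegL_mul hw0 hw'0
  rw [hw', degL_one] at hdeg
  rw [hw', ldegL_one] at hldeg
  have := ldegL_le_degL hw0
  have := ldegL_le_degL hw'0
  refine ⟨leadCoeff w, leadCoeff_ne_zero hw0, degL w, ?_⟩
  ext k
  change coeff w k = coeff _ k
  rw [coeff_C_mul_T]
  split_ifs with hk
  · rw [← hk]; rfl
  by_contra hne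
  have := le_degL hne
  have := ldegL_le hne
  omega

lemma hasSym_of_associated_invert {a : LP} (ha : a ≠ 0) (h : Associated (invert a) a) :
    HasSym a := by
  obtain ⟨w, hw⟩ := h
  obtain ⟨lam, -, n, hwe⟩ := exists_eq_C_mul_T_of_isUnit w.isUnit
  have hsym : a = C lam * T n * invert a := by rw [← hwe, mul_comm]; exact hw.symm
  have hinv : invert a = C (lam * lam) * invert a :=
    calc invert a = C lam * T (-n) * a := by
          conv_lhs => rw [hsym]
          simp only [map_mul, invert_C, invert_T, involutive_invert a]
      _ = C lam * C lam * (T (-n) * T n) * invert a := by nth_rw 1 [hsym]; ring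
      _ = C (lam * lam) * invert a := by rw [← T_add, neg_add_cancel, T_zero, mul_one, map_mul]
  have hsq : lam * lam = 1 := by
    refine C.injective ?_
    rw [map_one, ← mul_eq_right₀ (invert_ne_zero ha), ← hinv]
  exact ⟨lam, n, mul_self_eq_one_iff.mp hsq, symT_iff.mpr hsym⟩

lemma exists_associated_invert_mul_hstar_eq {u v : LP} (hu : u ≠ 0) (hv : v ≠ 0)
    (hsu : Associated (invert u) u) (hsv : Associated (invert v) v)
    (hdvd : v * hstar v ∣ u * hstar u) :
    ∃ d, d ≠ 0 ∧ Associated (invert d) d ∧ d * hstar d * (v * hstar v) = u * hstar u := by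
  let _ : GCDMonoid LP := IsBezout.toGCDDomain LP
  obtain ⟨u₁, v₁, hu₁, hv₁, hunit⟩ := extract_gcd u v
  set g := gcd u v
  have hg : g ≠ 0 := fun h => hu ((gcd_eq_zero_iff u v).mp h).1
  have hv₁0 : v₁ ≠ 0 := by rintro rfl; rw [mul_zero] at hv₁; exact hv hv₁
  have hinv : Function.Involutive (invert : LP ≃ₐ[ℂ] LP) := involutive_invert
  have hgs : Associated (invert g) g := associated_map_gcd hinv hsu hsv
  have hu₁s : Associated (invert u₁) u₁ :=
    associated_map_of_mul hinv hg (by rwa [hu₁] at hsu) hgs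
  have hv₁s : Associated (invert v₁) v₁ :=
    associated_map_of_mul hinv hg (by rwa [hv₁] at hsv) hgs
  obtain ⟨t, ht⟩ := hdvd
  have hcancel : u₁ * hstar u₁ = v₁ * hstar v₁ * t := by
    refine mul_left_cancel₀ (mul_ne_zero hg (hstar_ne_zero hg)) ?_
    rw [hu₁, hv₁, hstar_mul, hstar_mul] at ht
    linear_combination ht
  have hcop : IsCoprime (hstar v₁) (hstar u₁) := by
    simpa only [hstarRingHom_apply] using
      ((gcd_isUnit_iff_isRelPrime.mp hunit).isCoprime.map hstarRingHom).symm
  obtain ⟨d, hd⟩ : hstar v₁ ∣ u₁ := hcop.dvd_of_dvd_mul_right ⟨v₁ * t, by rw [hcancel]; ring⟩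
  refine ⟨d, ?_, associated_map_of_mul hinv (hstar_ne_zero hv₁0)
    (by rwa [hd] at hu₁s) (associated_invert_hstar hv₁s), ?_⟩
  · rintro rfl
    rw [hd, mul_zero, mul_zero] at hu₁
    exact hu hu₁
  · rw [hu₁, hd, hv₁]
    simp only [hstar_mul, hstar_hstar]
    ring

lemma SymT.ldegL_add_degL {a : LP} {ε : ℂ} {c : ℤ} (ha : a ≠ 0) (h : SymT a ε c) :
    ldegL a + degL a = c := by
  have hmirror : ∀ k, coeff a k ≠ 0 → coeff a (c - k) ≠ 0 := fun k hk h0 =>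
    hk (by rw [h k, h0, mul_zero])
  have := ldegL_le (hmirror _ (leadCoeff_ne_zero ha))
  have := le_degL (hmirror _ (trailCoeff_ne_zero ha))
  omega

lemma SymT.leadCoeff_eq {a : LP} {ε : ℂ} {c : ℤ} (ha : a ≠ 0) (h : SymT a ε c) :
    leadCoeff a = ε * trailCoeff a := by
  rw [leadCoeff, h, ← h.ldegL_add_degL ha, add_sub_cancel_right, trailCoeff]

lemma degL_mul_hstar {a : LP} (ha : a ≠ 0) : degL (a * hstar a) = degL a - ldegL a := by
  rw [degL_mul ha (hstar_ne_zero ha), degL_hstar, sub_eq_add_neg]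

lemma SymT.leadCoeff_mul_hstar {a : LP} {ε : ℂ} {c : ℤ} (ha : a ≠ 0) (h : SymT a ε c) :
    leadCoeff (a * hstar a) = ε * Complex.normSq (trailCoeff a) := by
  rw [leadCoeff_mul ha (hstar_ne_zero ha), leadCoeff_hstar, h.leadCoeff_eq ha, mul_assoc,
    Complex.mul_conj]

lemma sym_type_of_mul_hstar_eq {u v d : LP} {εu εv εd : ℂ} {cu cv cd : ℤ}
    (hu : u ≠ 0) (hv : v ≠ 0) (hεu : Sgn εu) (hεv : Sgn εv) (hεd : Sgn εd)
    (hsu : SymT u εu cu) (hsv : SymT v εv cv) (hsd : SymT d εd cd)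
    (heq : d * hstar d * (v * hstar v) = u * hstar u) :
    ∃ k : ℤ, εd = εu * εv ∧ cd = 2 * k + cu - cv := by
  have hd : d ≠ 0 := by
    rintro rfl
    rw [zero_mul, zero_mul] at heq
    exact mul_ne_zero hu (hstar_ne_zero hu) heq.symm
  have hdd := mul_ne_zero hd (hstar_ne_zero hd)
  have hvv := mul_ne_zero hv (hstar_ne_zero hv)
  have hdeg := congrArg degL heq
  rw [degL_mul hdd hvv, degL_mul_hstar hd, degL_mul_hstar hv, degL_mul_hstar hu] at hdeg
  have hlead := congrArg leadCoeff heq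
  rw [leadCoeff_mul hdd hvv, hsd.leadCoeff_mul_hstar hd, hsv.leadCoeff_mul_hstar hv,
    hsu.leadCoeff_mul_hstar hu] at hlead
  have hsign : εd * εv = εu := by
    refine (hεd.mul hεv).eq_of_mul_ofReal_eq hεu
      (mul_pos (Complex.normSq_pos.mpr (trailCoeff_ne_zero hd))
        (Complex.normSq_pos.mpr (trailCoeff_ne_zero hv)))
      (Complex.normSq_pos.mpr (trailCoeff_ne_zero hu)) ?_
    push_cast
    linear_combination hlead
  refine ⟨ldegL d - ldegL u + ldegL v, by rw [← hsign, mul_assoc, hεv.mul_self, mul_one], ?_⟩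
  have := hsd.ldegL_add_degL hd
  have := hsu.ldegL_add_degL hu
  have := hsv.ldegL_add_degL hv
  omega

/-- factorizing `u u⋆ / (v v⋆)` as `d d⋆` with symmetry
(Lemma 3.14 of the paper). -/
theorem quotient_of_hermitian_squares
    (u v : LP) (hu : u ≠ 0) (hv : v ≠ 0)
    (εu εv : ℂ) (cu cv : ℤ) (hεu : Sgn εu) (hεv : Sgn εv)
    (hsu : SymT u εu cu) (hsv : SymT v εv cv)
    (hdvd : v * hstar v ∣ u * hstar u) :
    (∃ d : LP, HasSym d ∧ d * hstar d * (v * hstar v) = u * hstar u) ∧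
    (∀ (d : LP) (εd : ℂ) (cd : ℤ), Sgn εd → SymT d εd cd →
      d * hstar d * (v * hstar v) = u * hstar u →
      ∃ k : ℤ, εd = εu * εv ∧ cd = 2 * k + cu - cv) := by
  obtain ⟨d, hd, hsd, heq⟩ := exists_associated_invert_mul_hstar_eq hu hv
    (hsu.associated_invert hεu.ne_zero) (hsv.associated_invert hεv.ne_zero) hdvd
  exact ⟨⟨d, hasSym_of_associated_invert hd hsd, heq⟩,
    fun d εd cd hεd hsd heq => sym_type_of_mul_hstar_eq hu hv hεu hεv hεd hsu hsv hsd heq⟩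

end QT
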